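/- Let 𝒳 be a finite alphabet, μ a probability measure on the simplex of distributions on 𝒳, and define the mixture distribution P̄ on 𝒳^n by P̄(x^n)=∫ P^n(x^n) dμ(P), where P^n is the n-fold product of P. Let φ be an n-length fixed-to-variable code, ε∈(0,1), and let k be a nonnegative integer such that P(ℓ(φ(X^n)) ≥ k) ≤ ε whenever X^n is i.i.d.∼P, for μ-almost every P. Then for every τ>0, ε ≥ P̄( log₂(1/P̄(X^n)) ≥ k+τ ) − 2^{−τ}, where on the right-hand side X^n is distributed according to P̄. -/

import Mathlib

open scoped BigOperators
open Classical

/-- `P` is a probability distribution on the finite alphabet `𝒳`. -/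
def IsDist {𝒳 : Type*} [Fintype 𝒳] (P : 𝒳 → ℝ) : Prop :=
  (∀ x, 0 ≤ P x) ∧ ∑ x, P x = 1

/-- Probability of the event `S` under the i.i.d. product distribution `P^n`. -/
noncomputable def seqProb {𝒳 : Type*} [Fintype 𝒳] (P : 𝒳 → ℝ) (n : ℕ)
    (S : (Fin n → 𝒳) → Prop) : ℝ :=
  ∑ xs : Fin n → 𝒳, if S xs then ∏ i, P (xs i) else 0

/-- The ε-coding rate of an n-length fixed-to-variable code φ:
`min{k/n : k ∈ ℤ≥0, P(ℓ(φ(Xⁿ)) > k) ≤ ε}`. -/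
noncomputable def epsRate {𝒳 : Type*} [Fintype 𝒳] (n : ℕ)
    (φ : (Fin n → 𝒳) → List Bool) (ε : ℝ) (P : 𝒳 → ℝ) : ℝ :=
  ((sInf {k : ℕ | seqProb P n (fun xs => k < (φ xs).length) ≤ ε} : ℕ) : ℝ) / n

/-- Entropy in bits: `H(P) = ∑ₓ −P(x) log₂ P(x)`. -/
noncomputable def ent {𝒳 : Type*} [Fintype 𝒳] (P : 𝒳 → ℝ) : ℝ :=
  ∑ x, -(P x * Real.logb 2 (P x))

/-- Varentropy: `V(P) = ∑ₓ P(x) (−log₂ P(x) − H(P))²`. -/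
noncomputable def varent {𝒳 : Type*} [Fintype 𝒳] (P : 𝒳 → ℝ) : ℝ :=
  ∑ x, P x * (-(Real.logb 2 (P x)) - ent P) ^ 2

/-- The type (empirical distribution) of a sequence. -/
noncomputable def typeOf {𝒳 : Type*} [Fintype 𝒳] {n : ℕ} (xs : Fin n → 𝒳) : 𝒳 → ℝ :=
  fun x => ((Finset.univ.filter fun i => xs i = x).card : ℝ) / n

/-- The size of the type class `T_t = {xⁿ : t_{xⁿ} = t}`. -/
noncomputable def typeClassCard {𝒳 : Type*} [Fintype 𝒳] (n : ℕ) (t : 𝒳 → ℝ) : ℕ :=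
  (Finset.univ.filter fun ys : Fin n → 𝒳 => typeOf ys = t).card

/-- Cardinality of the support `𝒳_P = {x : P(x) > 0}`. -/
noncomputable def suppCard {𝒳 : Type*} [Fintype 𝒳] (P : 𝒳 → ℝ) : ℕ :=
  (Finset.univ.filter fun x => 0 < P x).card

/-- The standard Gaussian tail function `Q(x) = ∫ₓ^∞ e^{−t²/2}/√(2π) dt`. -/
noncomputable def gaussQ (x : ℝ) : ℝ :=
  ∫ t in Set.Ioi x, Real.exp (-t ^ 2 / 2) / Real.sqrt (2 * Real.pi)

/-- The inverse of the Gaussian tail function `Q`. -/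
noncomputable def gaussQinv : ℝ → ℝ := Function.invFun gaussQ

open MeasureTheory

/-- The mixture distribution `P̄(xⁿ) = ∫ Pⁿ(xⁿ) dμ(P)` of i.i.d. distributions with
single-letter marginals drawn according to μ. -/
noncomputable def mixProb {𝒳 : Type*} [Fintype 𝒳] (μ : Measure (𝒳 → ℝ)) (n : ℕ)
    (xs : Fin n → 𝒳) : ℝ :=
  ∫ P, (∏ i, P (xs i)) ∂μ

/-
Split the event `{P̄(xⁿ) ≤ 2^{-(k+τ)}}` according to whether `ℓ(φ(xⁿ)) < k`.
Since `φ` is injective and there are fewer than `2^k` binary strings shorter than `k`, the first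
part has at most `2^k` elements, each of mass at most `2^{-(k+τ)}`, hence mass at most `2^{-τ}`.
The second part lies in `{ℓ(φ(xⁿ)) ≥ k}`, whose `P̄`-mass is the `μ`-average of its `Pⁿ`-masses,
each at most `ε`.
-/

open Finset

namespace List

/-- The number whose binary digits, least significant first, are `l ++ [true]`; the final `true`
is what makes this injective on lists of all lengths. -/
def binaryCode (l : List Bool) : ℕ :=
  Nat.ofDigits 2 ((l ++ [true]).map Bool.toNat)

theorem binaryCode_lt (l : List Bool) : l.binaryCode < 2 ^ (l.length + 1) := by
  simpa [binaryCode] using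
    Nat.ofDigits_lt_base_pow_length (l := (l ++ [true]).map Bool.toNat) one_lt_two
      (by simp only [List.mem_map]; rintro _ ⟨b, -, rfl⟩; exact b.toNat_lt)

theorem binaryCode_injective : Function.Injective binaryCode := by
  intro l₁ l₂ h
  have hdigits (l : List Bool) : Nat.digits 2 l.binaryCode = (l ++ [true]).map Bool.toNat :=
    Nat.digits_ofDigits 2 one_lt_two _
      (by simp only [List.mem_map]; rintro _ ⟨b, -, rfl⟩; exact b.toNat_lt) (by simp)
  have hmap := hdigits l₁
  rw [h, hdigits l₂] at hmap
  have htoNat : Function.Injective Bool.toNat := by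
    intro a b; cases a <;> cases b <;> simp
  exact List.append_cancel_right (List.map_injective_iff.mpr htoNat hmap).symm

end List

theorem Finset.card_le_two_pow_of_injOn_length_lt {α : Type*} {s : Finset α}
    {c : α → List Bool} {k : ℕ} (hc : Set.InjOn c s) (hlen : ∀ a ∈ s, (c a).length < k) :
    #s ≤ 2 ^ k := by
  simpa using card_le_card_of_injOn (t := range (2 ^ k)) (fun a => (c a).binaryCode)
    (fun a ha => mem_range.mpr <| (c a).binaryCode_lt.trans_le <|
      Nat.pow_le_pow_right two_pos (hlen a ha))
    (fun a ha b hb hab => hc ha hb (List.binaryCode_injective hab))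

theorem Real.le_rpow_neg_of_le_logb_one_div {b x y : ℝ} (hb : 1 < b)
    (h : x ≤ logb b (1 / y)) : y ≤ b ^ (-x) := by
  rcases le_or_gt y 0 with hy | hy
  · exact hy.trans (rpow_pos_of_pos (zero_lt_one.trans hb) _).le
  · rw [le_logb_iff_rpow_le hb (one_div_pos.mpr hy), le_one_div (by positivity) hy] at h
    rwa [rpow_neg (zero_lt_one.trans hb).le, ← one_div]

theorem IsDist.le_one {𝒳 : Type*} [Fintype 𝒳] {P : 𝒳 → ℝ} (hP : IsDist P) (x : 𝒳) :
    P x ≤ 1 :=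
  hP.2 ▸ single_le_sum (fun y _ => hP.1 y) (mem_univ x)

section Mixture

variable {𝒳 : Type*} [Fintype 𝒳] {μ : Measure (𝒳 → ℝ)} {n : ℕ}

theorem integrable_prod_apply [IsFiniteMeasure μ] (hμ : ∀ᵐ P ∂μ, IsDist P)
    (xs : Fin n → 𝒳) : Integrable (fun P : 𝒳 → ℝ => ∏ i, P (xs i)) μ := by
  refine (integrable_const (1 : ℝ)).mono'
    (by fun_prop : Measurable fun P : 𝒳 → ℝ => ∏ i, P (xs i)).aestronglyMeasurable ?_
  filter_upwards [hμ] with P hP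
  rw [Real.norm_eq_abs, abs_of_nonneg (prod_nonneg fun _ _ => hP.1 _)]
  exact prod_le_one (fun _ _ => hP.1 _) fun _ _ => hP.le_one _

theorem mixProb_nonneg (hμ : ∀ᵐ P ∂μ, IsDist P) (xs : Fin n → 𝒳) : 0 ≤ mixProb μ n xs :=
  integral_nonneg_of_ae <| hμ.mono fun _ hP => prod_nonneg fun _ _ => hP.1 _

theorem seqProb_eq_sum_filter (P : 𝒳 → ℝ) (S : (Fin n → 𝒳) → Prop) [DecidablePred S] :
    seqProb P n S = ∑ xs ∈ univ.filter S, ∏ i, P (xs i) := by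
  rw [seqProb, sum_filter]
  congr!

theorem sum_filter_mixProb_le [IsProbabilityMeasure μ] {S : (Fin n → 𝒳) → Prop}
    [DecidablePred S] {ε : ℝ} (h : ∀ᵐ P ∂μ, IsDist P ∧ seqProb P n S ≤ ε) :
    ∑ xs ∈ univ.filter S, mixProb μ n xs ≤ ε := by
  have hint := fun xs (_ : xs ∈ univ.filter S) =>
    integrable_prod_apply (h.mono fun _ hP => hP.1) xs
  have hintS : Integrable (fun P => seqProb P n S) μ := by
    simpa only [seqProb_eq_sum_filter] using integrable_finsetSum _ hint
  calc ∑ xs ∈ univ.filter S, mixProb μ n xs = ∫ P, seqProb P n S ∂μ := by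
        simp only [seqProb_eq_sum_filter, integral_finsetSum _ hint, mixProb]
    _ ≤ ε := by
        simpa using integral_mono_ae hintS (integrable_const ε) (h.mono fun _ hP => hP.2)

end Mixture

theorem stmt11_general {𝒳 : Type*} [Fintype 𝒳] (n : ℕ)
    (μ : Measure (𝒳 → ℝ)) [IsProbabilityMeasure μ]
    (φ : (Fin n → 𝒳) → List Bool) (hφ : Function.Injective φ)
    (ε : ℝ) (k : ℕ)
    (hcode : ∀ᵐ P ∂μ, IsDist P ∧ seqProb P n (fun xs => k ≤ (φ xs).length) ≤ ε) :
    ∀ τ : ℝ, 0 < τ →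
      (∑ xs : Fin n → 𝒳,
          if (k : ℝ) + τ ≤ Real.logb 2 (1 / mixProb μ n xs) then mixProb μ n xs else 0)
        - (2 : ℝ) ^ (-τ) ≤ ε := by
  intro τ _
  have hμ : ∀ᵐ P ∂μ, IsDist P := hcode.mono fun _ hP => hP.1
  set A := univ.filter fun xs => (k : ℝ) + τ ≤ Real.logb 2 (1 / mixProb μ n xs)
  have hshort : ∑ xs ∈ A.filter (fun xs => (φ xs).length < k), mixProb μ n xs ≤ 2 ^ (-τ) :=
    calc _ ≤ #(A.filter fun xs => (φ xs).length < k) • (2 : ℝ) ^ (-((k : ℝ) + τ)) :=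
          sum_le_card_nsmul _ _ _ fun xs hxs =>
            Real.le_rpow_neg_of_le_logb_one_div one_lt_two (mem_filter.mp (mem_filter.mp hxs).1).2
      _ ≤ 2 ^ k * (2 : ℝ) ^ (-((k : ℝ) + τ)) := by
          rw [nsmul_eq_mul]
          gcongr
          exact_mod_cast
            card_le_two_pow_of_injOn_length_lt hφ.injOn fun xs hxs => (mem_filter.mp hxs).2
      _ = 2 ^ (-τ) := by
          rw [← Real.rpow_natCast, ← Real.rpow_add two_pos]
          ring_nf
  have hlong : ∑ xs ∈ A.filter (fun xs => ¬(φ xs).length < k), mixProb μ n xs ≤ ε :=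
    calc _ ≤ ∑ xs ∈ univ.filter (fun xs => k ≤ (φ xs).length), mixProb μ n xs :=
          sum_le_sum_of_subset_of_nonneg (fun xs hxs => by simpa using (mem_filter.mp hxs).2)
            fun xs _ _ => mixProb_nonneg hμ xs
      _ ≤ ε := sum_filter_mixProb_le hcode
  rw [← sum_filter, ← sum_filter_add_sum_filter_not A fun xs => (φ xs).length < k]
  linarith

/-- Finite-blocklength converse via mixtures (Theorem 4): if μ is a probability measure
concentrated on distributions P for which the code φ satisfies
`P(ℓ(φ(Xⁿ)) ≥ k) ≤ ε`, then for every τ > 0,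
`ε ≥ P̄(log₂(1/P̄(Xⁿ)) ≥ k + τ) − 2^{−τ}` where Xⁿ ~ P̄. -/
theorem stmt11 {𝒳 : Type*} [Fintype 𝒳] (n : ℕ) (hn : 0 < n)
    (μ : Measure (𝒳 → ℝ)) [IsProbabilityMeasure μ]
    (φ : (Fin n → 𝒳) → List Bool) (hφ : Function.Injective φ)
    (ε : ℝ) (hε : ε ∈ Set.Ioo (0 : ℝ) 1) (k : ℕ)
    (hcode : ∀ᵐ P ∂μ, IsDist P ∧ seqProb P n (fun xs => k ≤ (φ xs).length) ≤ ε) :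
    ∀ τ : ℝ, 0 < τ →
      (∑ xs : Fin n → 𝒳,
          if (k : ℝ) + τ ≤ Real.logb 2 (1 / mixProb μ n xs) then mixProb μ n xs else 0)
        - (2 : ℝ) ^ (-τ) ≤ ε :=
  stmt11_general n μ φ hφ ε k hcode
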